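/- arXiv:1702.05814 — 10 statements merged into one kernel-verified Lean document; each statement's English description precedes it below -/
import Mathlib

section
/- Let U and A be left cancellative monoids equipped with a Zappa–Szép datum (maps (a,u) ↦ a·u and (a,u) ↦ a|_u satisfying (B1)–(B8)), and suppose that for every a ∈ A the map u ↦ a·u is injective on U. Then the Zappa–Szép product U ⋈ A is left cancellative: for all (u,a), (v,b), (w,c) in U × A, if (u,a)(v,b) = (u,a)(w,c) then (v,b) = (w,c). -/
/-- If `U` and `A` are left cancellative monoids equipped with a Zappa–Szép datum
(maps satisfying (B1)–(B8)) such that each map `u ↦ a·u` is injective, then the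
Zappa–Szép product `U ⋈ A` is left cancellative. -/
theorem zappaSzep_product_leftCancellative {U A : Type*} [Monoid U] [Monoid A]
    (hU : ∀ p x y : U, p * x = p * y → x = y)
    (hA : ∀ p x y : A, p * x = p * y → x = y)
    (act : A → U → U) (res : A → U → A)
    (B1 : ∀ u : U, act 1 u = u)
    (B2 : ∀ (a b : A) (u : U), act (a * b) u = act a (act b u))
    (B3 : ∀ a : A, act a 1 = 1)
    (B4 : ∀ (a : A) (u v : U), act a (u * v) = act a u * act (res a u) v)
    (B5 : ∀ a : A, res a 1 = a)
    (B6 : ∀ (a : A) (u v : U), res a (u * v) = res (res a u) v)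
    (B7 : ∀ u : U, res 1 u = 1)
    (B8 : ∀ (a b : A) (u : U), res (a * b) u = res a (act b u) * res b u)
    (hinj : ∀ a : A, Function.Injective (act a))
    (mul : U × A → U × A → U × A)
    (hmul : ∀ x y : U × A, mul x y = (x.1 * act x.2 y.1, res x.2 y.1 * y.2)) :
    ∀ x y z : U × A, mul x y = mul x z → y = z := by
  rintro ⟨u, a⟩ ⟨v, b⟩ ⟨w, c⟩ h
  rw [hmul, hmul] at h
  obtain ⟨h1, h2⟩ := Prod.mk.injEq .. ▸ h
  have hv : v = w := hinj a (hU u _ _ h1)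
  subst hv
  exact Prod.ext rfl (hA _ _ _ h2)
end

section
/- Let U be a monoid and G a group equipped with a Zappa–Szép datum (maps (g,u) ↦ g·u and (g,u) ↦ g|_u satisfying (B1)–(B8)). Then for all b, c ∈ G, all u, v ∈ U and every subset S ⊆ U with c|_v = b, one has b·(v^{-1}(uS)) = (c·v)^{-1}(c·(uS)); here for g ∈ G and T ⊆ U, g·T denotes the image of T under x ↦ g·x, wT denotes the image of T under left multiplication by w ∈ U, and w^{-1}T = {x ∈ U : wx ∈ T}. -/
/-- For a Zappa–Szép datum of a group `G` on a monoid `U`, for `b, c ∈ G`,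
`u, v ∈ U` and `S ⊆ U` with `c|_v = b`, one has
`b·(v⁻¹(uS)) = (c·v)⁻¹(c·(uS))`, where `g·T` is the image of `T` under `x ↦ g·x`,
`wT` is the image of `T` under left multiplication by `w`, and
`w⁻¹T = {x ∈ U : wx ∈ T}`. -/
theorem zappaSzep_ideal_action {U G : Type*} [Monoid U] [Group G]
    (act : G → U → U) (res : G → U → G)
    (B1 : ∀ u : U, act 1 u = u)
    (B2 : ∀ (g h : G) (u : U), act (g * h) u = act g (act h u))
    (B3 : ∀ g : G, act g 1 = 1)
    (B4 : ∀ (g : G) (u v : U), act g (u * v) = act g u * act (res g u) v)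
    (B5 : ∀ g : G, res g 1 = g)
    (B6 : ∀ (g : G) (u v : U), res g (u * v) = res (res g u) v)
    (B7 : ∀ u : U, res 1 u = 1)
    (B8 : ∀ (g h : G) (u : U), res (g * h) u = res g (act h u) * res h u)
    (b c : G) (u v : U) (S : Set U) (hb : res c v = b) :
    act b '' {x : U | v * x ∈ (fun y => u * y) '' S} =
      {x : U | act c v * x ∈ act c '' ((fun y => u * y) '' S)} := by
  have hinj : ∀ g : G, Function.Injective (act g) := by
    intro g x y hxy
    have := congrArg (act g⁻¹) hxy
    rwa [← B2, ← B2, inv_mul_cancel, B1, B1] at this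
  ext x
  constructor
  · rintro ⟨y, hy, rfl⟩
    exact ⟨v * y, hy, by rw [B4, hb]⟩
  · intro hx
    rcases hx with ⟨t, ht, hct⟩
    refine ⟨act b⁻¹ x, ?_, by rw [← B2, mul_inv_cancel, B1]⟩
    have hx' : act b (act b⁻¹ x) = x := by rw [← B2, mul_inv_cancel, B1]
    have : act c (v * act b⁻¹ x) = act c t := by
      rw [B4, hb, hx', hct]
    have := hinj c this.symm
    simpa [← this] using ht
end

section
/- Let U be a left cancellative monoid and G a group equipped with a Zappa–Szép datum (maps (g,u) ↦ g·u and (g,u) ↦ g|_u satisfying (B1)–(B8)), and suppose that for all u ∈ U and b ∈ G there exists a ∈ G with a|_u = b. Then for every a ∈ G and every constructible right ideal X ∈ 𝒥(U), the image a·X of X under the map x ↦ a·x again belongs to 𝒥(U). -/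
/-- The set of constructible right ideals of a monoid-like multiplication `mul` on `P`:
`∅` together with all sets `p₁⁻¹q₁ ⋯ pₙ⁻¹qₙ P` (operations applied from right to left),
where `qX` is the image of `X` under left multiplication by `q` and
`p⁻¹X = {x : px ∈ X}`.  (The full set `P` itself arises from `n = 1`, `p = q = 1`.) -/
def constructibles {P : Type*} (mul : P → P → P) : Set (Set P) :=
  insert ∅
    { X | ∃ l : List (P × P),
        X = l.foldr (fun pq Y => {x | mul pq.1 x ∈ (fun y => mul pq.2 y) '' Y}) Set.univ }

/-- Let `U` be a left cancellative monoid and `G` a group equipped with a Zappa–Szép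
datum (B1)–(B8) such that for all `u ∈ U`, `b ∈ G` there is `a ∈ G` with `a|_u = b`.
Then for every `a ∈ G` and every constructible right ideal `X ∈ 𝒥(U)`, the image
`a·X` again belongs to `𝒥(U)`. -/
theorem act_constructible_mem {U G : Type*} [Monoid U] [Group G]
    (hU : ∀ p x y : U, p * x = p * y → x = y)
    (act : G → U → U) (res : G → U → G)
    (B1 : ∀ u : U, act 1 u = u)
    (B2 : ∀ (g h : G) (u : U), act (g * h) u = act g (act h u))
    (B3 : ∀ g : G, act g 1 = 1)
    (B4 : ∀ (g : G) (u v : U), act g (u * v) = act g u * act (res g u) v)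
    (B5 : ∀ g : G, res g 1 = g)
    (B6 : ∀ (g : G) (u v : U), res g (u * v) = res (res g u) v)
    (B7 : ∀ u : U, res 1 u = 1)
    (B8 : ∀ (g h : G) (u : U), res (g * h) u = res g (act h u) * res h u)
    (hres : ∀ (u : U) (b : G), ∃ a : G, res a u = b) :
    ∀ a : G, ∀ X ∈ constructibles (fun x y : U => x * y),
      act a '' X ∈ constructibles (fun x y : U => x * y) := by

  intro a X hX
  -- act g is a bijection with inverse act g⁻¹
  have hinv : ∀ (g : G) (u : U), act g (act g⁻¹ u) = u := by
    intro g u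
    rw [← B2, mul_inv_cancel, B1]
  have hinj : ∀ (g : G) (u v : U), act g u = act g v → u = v := by
    intro g u v h
    have := congrArg (act g⁻¹) h
    rwa [← B2, ← B2, inv_mul_cancel, B1, B1] at this
  rcases hX with rfl | ⟨l, rfl⟩
  · left; simp
  · right
    -- main induction
    suffices h : ∀ (l : List (U × U)) (a : G), ∃ l' : List (U × U),
        act a '' (l.foldr (fun pq Y => {x | pq.1 * x ∈ (fun y => pq.2 * y) '' Y}) Set.univ)
        = l'.foldr (fun pq Y => {x | pq.1 * x ∈ (fun y => pq.2 * y) '' Y}) Set.univ by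
      exact h l a
    intro l
    induction l with
    | nil =>
      intro a
      refine ⟨[], ?_⟩
      simp only [List.foldr_nil]
      ext x
      simp only [Set.mem_image, Set.mem_univ, iff_true]
      exact ⟨act a⁻¹ x, trivial, hinv a x⟩
    | cons pq l ih =>
      intro a
      obtain ⟨p, q⟩ := pq
      obtain ⟨c, hc⟩ := hres p a
      obtain ⟨l', hl'⟩ := ih (res c q)
      refine ⟨(act c p, act c q) :: l', ?_⟩
      set Y := l.foldr (fun pq Y => {x | pq.1 * x ∈ (fun y => pq.2 * y) '' Y}) Set.univ with hY
      simp only [List.foldr_cons, ← hl']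
      ext z
      constructor
      · rintro ⟨x, hx, rfl⟩
        obtain ⟨y, hy, hxy⟩ := hx
        refine ⟨act (res c q) y, ⟨y, hy, rfl⟩, ?_⟩
        have h1 : act c (q * y) = act c q * act (res c q) y := B4 c q y
        have h2 : act c (p * x) = act c p * act a x := by rw [B4, hc]
        show act c q * act (res c q) y = act c p * act a x
        have hxy' : q * y = p * x := hxy
        rw [← h1, hxy', h2]
      · rintro ⟨w, ⟨y, hy, rfl⟩, hw⟩
        refine ⟨act a⁻¹ z, ?_, hinv a z⟩
        have h1 : act c (q * y) = act c q * act (res c q) y := B4 c q y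
        have h2 : act c (p * act a⁻¹ z) = act c p * z := by
          rw [B4, hc, hinv]
        have hw' : act c q * act (res c q) y = act c p * z := hw
        have : act c (p * act a⁻¹ z) = act c (q * y) := by rw [h1, h2, hw']
        exact ⟨y, hy, (hinj c _ _ this).symm⟩
end

section
/- Let U be a left cancellative monoid and G a group equipped with a Zappa–Szép datum (maps (g,u) ↦ g·u and (g,u) ↦ g|_u satisfying (B1)–(B8)), and suppose that for all u ∈ U and b ∈ G there exists a ∈ G with a|_u = b. Then the constructible right ideals of the Zappa–Szép product U ⋈ G are exactly the sets X × G with X ∈ 𝒥(U): that is, 𝒥(U ⋈ G) = { X × G : X ∈ 𝒥(U) }. -/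
section ZSAux

variable {U G : Type*} [Monoid U] [Group G]

/-- The elementary step `X ↦ p⁻¹(qX)` on subsets of `U`. -/
private def stepU : U × U → Set U → Set U :=
  fun pq Y => {x | pq.1 * x ∈ (fun y => pq.2 * y) '' Y}

/-- The elementary step on subsets of the Zappa–Szép product. -/
private def stepP (act : G → U → U) (res : G → U → G) :
    (U × G) × (U × G) → Set (U × G) → Set (U × G) :=
  fun pq Y => {x | (fun x y : U × G => (x.1 * act x.2 y.1, res x.2 y.1 * y.2)) pq.1 x ∈
      ((fun x y : U × G => (x.1 * act x.2 y.1, res x.2 y.1 * y.2)) pq.2) '' Y}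

variable (act : G → U → U) (res : G → U → G)
  (B1 : ∀ u : U, act 1 u = u)
  (B2 : ∀ (g h : G) (u : U), act (g * h) u = act g (act h u))
  (B4 : ∀ (g : G) (u v : U), act g (u * v) = act g u * act (res g u) v)
  (hres : ∀ (u : U) (b : G), ∃ a : G, res a u = b)

include B1 B2 in
private lemma act_bij (g : G) : Function.Bijective (act g) := by
  constructor
  · intro x y hxy
    have h := congrArg (act g⁻¹) hxy
    rwa [← B2, ← B2, inv_mul_cancel, B1, B1] at h
  · intro y
    exact ⟨act g⁻¹ y, by rw [← B2, mul_inv_cancel, B1]⟩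

include B1 B2 B4 hres in
private lemma img_act :
    ∀ (l : List (U × U)) (g : G), ∃ l' : List (U × U),
      act g '' (l.foldr stepU Set.univ) = l'.foldr stepU Set.univ := by
  intro l
  induction l with
  | nil =>
    intro g
    exact ⟨[], by simp [Set.image_univ, (act_bij act B1 B2 g).2.range_eq]⟩
  | cons pq l ih =>
    intro g
    obtain ⟨h, hh⟩ := hres pq.1 g
    obtain ⟨l', hl'⟩ := ih (res h pq.2)
    refine ⟨(act h pq.1, act h pq.2) :: l', ?_⟩
    have key : act g '' (stepU pq (l.foldr stepU Set.univ))
        = stepU (act h pq.1, act h pq.2)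
            (act (res h pq.2) '' (l.foldr stepU Set.univ)) := by
      ext w
      simp only [stepU, Set.mem_image, Set.mem_setOf_eq]
      constructor
      · rintro ⟨v, ⟨y, hy, hqy⟩, rfl⟩
        refine ⟨act (res h pq.2) y, ⟨y, hy, rfl⟩, ?_⟩
        rw [← B4, hqy, B4, hh]
      · rintro ⟨_, ⟨y, hy, rfl⟩, hw⟩
        refine ⟨act g⁻¹ w, ⟨y, hy, ?_⟩, by rw [← B2, mul_inv_cancel, B1]⟩
        apply (act_bij act B1 B2 h).1
        rw [B4, B4, hh, ← B2, mul_inv_cancel, B1, hw]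
    rw [List.foldr_cons, key, hl', List.foldr_cons]

include B1 B2 B4 hres in
private lemma twisted (l : List (U × U)) (p : U) (a : G) (q : U) (b : G) :
    ∃ l' : List (U × U),
      {v : U | p * act a v ∈ (fun y => q * act b y) '' (l.foldr stepU Set.univ)}
        = l'.foldr stepU Set.univ := by
  obtain ⟨l₁, hl₁⟩ := img_act act res B1 B2 B4 hres l b
  obtain ⟨l₂, hl₂⟩ := img_act act res B1 B2 B4 hres ((p, q) :: l₁) a⁻¹
  refine ⟨l₂, ?_⟩
  rw [← hl₂, List.foldr_cons, ← hl₁]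
  ext v
  simp only [Set.mem_setOf_eq, Set.mem_image, stepU]
  constructor
  · rintro ⟨y, hy, hqy⟩
    refine ⟨act a v, ⟨act b y, ⟨y, hy, rfl⟩, hqy⟩, by rw [← B2, inv_mul_cancel, B1]⟩
  · rintro ⟨w, ⟨z, ⟨y, hy, rfl⟩, hw⟩, rfl⟩
    refine ⟨y, hy, ?_⟩
    rwa [← B2, mul_inv_cancel, B1]

private lemma stepP_prod (p : U) (a : G) (q : U) (b : G) (X : Set U) :
    stepP act res ((p, a), (q, b)) (X ×ˢ (Set.univ : Set G))
      = {v : U | p * act a v ∈ (fun y => q * act b y) '' X} ×ˢ (Set.univ : Set G) := by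
  ext x
  simp only [stepP, Set.mem_prod, Set.mem_setOf_eq, Set.mem_image, Set.mem_univ, and_true]
  constructor
  · rintro ⟨y, hy, hxy⟩
    exact ⟨y.1, hy, congrArg Prod.fst hxy⟩
  · rintro ⟨u, hu, huv⟩
    refine ⟨(u, (res b u)⁻¹ * (res a x.1 * x.2)), hu, ?_⟩
    simp [Prod.ext_iff, huv, mul_inv_cancel_left]

include B1 B2 B4 hres in
private lemma prod_to_U :
    ∀ L : List ((U × G) × (U × G)), ∃ l : List (U × U),
      L.foldr (stepP act res) Set.univ
        = (l.foldr stepU Set.univ) ×ˢ (Set.univ : Set G) := by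
  intro L
  induction L with
  | nil => exact ⟨[], by simp⟩
  | cons pq L ih =>
    rcases pq with ⟨⟨p, a⟩, q, b⟩
    obtain ⟨l, hl⟩ := ih
    obtain ⟨l', hl'⟩ := twisted act res B1 B2 B4 hres l p a q b
    refine ⟨l', ?_⟩
    rw [List.foldr_cons, hl, stepP_prod, hl']

include B1 in
private lemma U_to_prod :
    ∀ l : List (U × U),
      ((l.map fun pq => ((pq.1, (1 : G)), (pq.2, (1 : G)))).foldr (stepP act res) Set.univ)
        = (l.foldr stepU Set.univ) ×ˢ (Set.univ : Set G) := by
  intro l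
  induction l with
  | nil => simp
  | cons pq l ih =>
    rcases pq with ⟨p, q⟩
    rw [List.map_cons, List.foldr_cons, List.foldr_cons, ih, stepP_prod]
    congr 1
    ext v
    simp only [stepU, Set.mem_setOf_eq, B1]

end ZSAux

/-- Let `U` be a left cancellative monoid and `G` a group equipped with a Zappa–Szép
datum (B1)–(B8) such that for all `u ∈ U`, `b ∈ G` there is `a ∈ G` with `a|_u = b`.
Then the constructible right ideals of the Zappa–Szép product `U ⋈ G`
(with multiplication `(u,a)(v,b) = (u(a·v), (a|_v)b)`) are exactly the sets `X × G`
with `X ∈ 𝒥(U)`. -/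
theorem constructibles_zappaSzep {U G : Type*} [Monoid U] [Group G]
    (hU : ∀ p x y : U, p * x = p * y → x = y)
    (act : G → U → U) (res : G → U → G)
    (B1 : ∀ u : U, act 1 u = u)
    (B2 : ∀ (g h : G) (u : U), act (g * h) u = act g (act h u))
    (B3 : ∀ g : G, act g 1 = 1)
    (B4 : ∀ (g : G) (u v : U), act g (u * v) = act g u * act (res g u) v)
    (B5 : ∀ g : G, res g 1 = g)
    (B6 : ∀ (g : G) (u v : U), res g (u * v) = res (res g u) v)
    (B7 : ∀ u : U, res 1 u = 1)
    (B8 : ∀ (g h : G) (u : U), res (g * h) u = res g (act h u) * res h u)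
    (hres : ∀ (u : U) (b : G), ∃ a : G, res a u = b) :
    constructibles (fun x y : U × G => (x.1 * act x.2 y.1, res x.2 y.1 * y.2)) =
      { S : Set (U × G) | ∃ X ∈ constructibles (fun x y : U => x * y),
          S = X ×ˢ (Set.univ : Set G) } := by
  ext S
  simp only [constructibles, Set.mem_insert_iff, Set.mem_setOf_eq]
  constructor
  · rintro (rfl | ⟨L, rfl⟩)
    · exact ⟨∅, Or.inl rfl, by simp⟩
    · obtain ⟨l, hl⟩ := prod_to_U act res B1 B2 B4 hres L
      exact ⟨_, Or.inr ⟨l, rfl⟩, hl⟩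
  · rintro ⟨X, (rfl | ⟨l, rfl⟩), rfl⟩
    · left; simp
    · right
      refine ⟨l.map fun pq => ((pq.1, (1 : G)), (pq.2, (1 : G))), ?_⟩
      exact (U_to_prod act res B1 l).symm
end

section
/- Let U be a left cancellative monoid and G a group equipped with a Zappa–Szép datum (maps (g,u) ↦ g·u and (g,u) ↦ g|_u satisfying (B1)–(B8)), and suppose that for all u ∈ U and b ∈ G there exists a ∈ G with a|_u = b. Then for every finite subset F ⊆ 𝒥(U), F is a foundation set of 𝒥(U) if and only if { X × G : X ∈ F } is a foundation set of 𝒥(U ⋈ G). -/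
/-- A foundation set for the multiplication `mul` is a finite subset `F` of the
constructible right ideals such that every nonempty constructible right ideal `Y`
meets some member of `F`. -/
def IsFoundationSet {P : Type*} (mul : P → P → P) (F : Set (Set P)) : Prop :=
  F.Finite ∧ F ⊆ constructibles mul ∧
    ∀ Y ∈ constructibles mul, Y.Nonempty → ∃ X ∈ F, (X ∩ Y).Nonempty

set_option linter.unusedSectionVars false

namespace ZSAux

variable {U G : Type*} [Monoid U] [Group G]

def fU : U × U → Set U → Set U :=
  fun pq Y => {x | pq.1 * x ∈ (fun y => pq.2 * y) '' Y}

def fP (act : G → U → U) (res : G → U → G) :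
    (U × G) × (U × G) → Set (U × G) → Set (U × G) :=
  fun pq Y => {x | (pq.1.1 * act pq.1.2 x.1, res pq.1.2 x.1 * x.2) ∈
    (fun y => (pq.2.1 * act pq.2.2 y.1, res pq.2.2 y.1 * y.2)) '' Y}

theorem constructibles_U_eq :
    constructibles (fun x y : U => x * y)
      = insert ∅ { X | ∃ l : List (U × U), X = l.foldr fU Set.univ } := rfl

theorem constructibles_P_eq (act : G → U → U) (res : G → U → G) :
    constructibles (fun x y : U × G => (x.1 * act x.2 y.1, res x.2 y.1 * y.2))
      = insert ∅ { X | ∃ l : List ((U × G) × (U × G)),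
          X = l.foldr (fP act res) Set.univ } := rfl

section Basic

variable (act : G → U → U) (res : G → U → G)
  (B1 : ∀ u : U, act 1 u = u)
  (B2 : ∀ (g h : G) (u : U), act (g * h) u = act g (act h u))

include B1 B2

theorem act_inv_left (g : G) (u : U) : act g⁻¹ (act g u) = u := by
  rw [← B2, inv_mul_cancel, B1]

theorem act_inv_right (g : G) (u : U) : act g (act g⁻¹ u) = u := by
  rw [← B2, mul_inv_cancel, B1]

theorem act_image (g : G) (X : Set U) : act g '' X = {v | act g⁻¹ v ∈ X} := by
  ext v
  constructor
  · rintro ⟨u, hu, rfl⟩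
    simpa [act_inv_left act B1 B2] using hu
  · intro h
    exact ⟨act g⁻¹ v, h, act_inv_right act B1 B2 g v⟩

theorem preimage_act_eq (a : G) (S : Set U) :
    {u : U | act a u ∈ S} = act a⁻¹ '' S := by
  rw [act_image act B1 B2, inv_inv]

end Basic

theorem res_inv (act : G → U → U) (res : G → U → G)
    (B7 : ∀ u : U, res 1 u = 1)
    (B8 : ∀ (g h : G) (u : U), res (g * h) u = res g (act h u) * res h u)
    (a : G) (p : U) : res a⁻¹ (act a p) = (res a p)⁻¹ := by
  have h := B8 a⁻¹ a p
  rw [inv_mul_cancel, B7] at h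
  exact eq_inv_of_mul_eq_one_left h.symm

/-- Lemma A: images of constructible sets under the action are constructible. -/
theorem lemA (act : G → U → U) (res : G → U → G)
    (B1 : ∀ u : U, act 1 u = u)
    (B2 : ∀ (g h : G) (u : U), act (g * h) u = act g (act h u))
    (B4 : ∀ (g : G) (u v : U), act g (u * v) = act g u * act (res g u) v)
    (B7 : ∀ u : U, res 1 u = 1)
    (B8 : ∀ (g h : G) (u : U), res (g * h) u = res g (act h u) * res h u)
    (hres : ∀ (u : U) (b : G), ∃ a : G, res a u = b) :
    ∀ (l : List (U × U)) (g : G), ∃ l' : List (U × U),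
      act g '' l.foldr fU Set.univ = l'.foldr fU Set.univ := by
  intro l
  induction l with
  | nil =>
    intro g
    refine ⟨[], ?_⟩
    simp only [List.foldr_nil, Set.image_univ]
    exact Set.range_eq_univ.mpr fun v => ⟨act g⁻¹ v, act_inv_right act B1 B2 g v⟩
  | cons pq l ih =>
    intro g
    obtain ⟨p, q⟩ := pq
    obtain ⟨a, ha⟩ := hres p g
    obtain ⟨l'', hl''⟩ := ih (res a q)
    refine ⟨(act a p, act a q) :: l'', ?_⟩
    rw [List.foldr_cons, List.foldr_cons, ← hl'', act_image act B1 B2]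
    ext v
    simp only [fU, Set.mem_setOf_eq, Set.mem_image]
    constructor
    · rintro ⟨y, hy, hqy⟩
      refine ⟨act (res a q) y, ⟨y, hy, rfl⟩, ?_⟩
      have h2 := congrArg (act a) hqy
      rw [B4, B4, ha, act_inv_right act B1 B2] at h2
      exact h2
    · rintro ⟨_, ⟨y, hy, rfl⟩, hqy⟩
      refine ⟨y, hy, ?_⟩
      have h2 := congrArg (act a⁻¹) hqy
      rw [← B4, act_inv_left act B1 B2, B4, act_inv_left act B1 B2,
        res_inv act res B7 B8, ha] at h2
      exact h2


/-- Lemma B: constructible sets of `U ⋈ G` are products of constructible sets of `U`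
with the full group. -/
theorem lemB (act : G → U → U) (res : G → U → G)
    (B1 : ∀ u : U, act 1 u = u)
    (B2 : ∀ (g h : G) (u : U), act (g * h) u = act g (act h u))
    (B4 : ∀ (g : G) (u v : U), act g (u * v) = act g u * act (res g u) v)
    (B7 : ∀ u : U, res 1 u = 1)
    (B8 : ∀ (g h : G) (u : U), res (g * h) u = res g (act h u) * res h u)
    (hres : ∀ (u : U) (b : G), ∃ a : G, res a u = b) :
    ∀ L : List ((U × G) × (U × G)), ∃ l : List (U × U),
      L.foldr (fP act res) Set.univ = (l.foldr fU Set.univ) ×ˢ (Set.univ : Set G) := by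
  intro L
  induction L with
  | nil => exact ⟨[], by simp⟩
  | cons PQ L ih =>
    obtain ⟨⟨p₁, a⟩, q₁, b⟩ := PQ
    obtain ⟨l, hl⟩ := ih
    have hstep : (fP act res) ((p₁, a), (q₁, b)) ((l.foldr fU Set.univ) ×ˢ (Set.univ : Set G))
        = {u : U | act a u ∈ fU (p₁, q₁) (act b '' l.foldr fU Set.univ)}
            ×ˢ (Set.univ : Set G) := by
      ext ⟨u, g⟩
      simp only [fP, fU, Set.mem_setOf_eq, Set.mem_image, Set.mem_prod, Set.mem_univ,
        and_true, Prod.exists, Prod.mk.injEq]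
      constructor
      · rintro ⟨v, h, hv, h1, h2⟩
        exact ⟨act b v, ⟨v, hv, rfl⟩, h1⟩
      · rintro ⟨_, ⟨v, hv, rfl⟩, h1⟩
        exact ⟨v, (res b v)⁻¹ * (res a u * g), hv, h1, by group⟩
    rw [List.foldr_cons, hl, hstep]
    obtain ⟨l₁, hl₁⟩ := lemA act res B1 B2 B4 B7 B8 hres l b
    obtain ⟨l₂, hl₂⟩ := lemA act res B1 B2 B4 B7 B8 hres ((p₁, q₁) :: l₁) a⁻¹
    refine ⟨l₂, ?_⟩
    rw [preimage_act_eq act B1 B2, hl₁]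
    rw [show fU (p₁, q₁) (l₁.foldr fU Set.univ) = ((p₁, q₁) :: l₁).foldr fU Set.univ from rfl,
      hl₂]

/-- Lemma C: products of constructible sets of `U` with the full group are
constructible in `U ⋈ G`. -/
theorem lemC (act : G → U → U) (res : G → U → G)
    (B1 : ∀ u : U, act 1 u = u)
    (B7 : ∀ u : U, res 1 u = 1) :
    ∀ l : List (U × U),
      (l.map (fun pq => ((pq.1, (1 : G)), (pq.2, (1 : G))))).foldr (fP act res) Set.univ
        = (l.foldr fU Set.univ) ×ˢ (Set.univ : Set G) := by
  intro l
  induction l with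
  | nil => simp
  | cons pq l ih =>
    obtain ⟨p, q⟩ := pq
    rw [List.map_cons, List.foldr_cons, ih, List.foldr_cons]
    ext ⟨u, g⟩
    simp only [fP, fU, Set.mem_setOf_eq, Set.mem_image, Set.mem_prod, Set.mem_univ,
      and_true, Prod.exists, Prod.mk.injEq, B1, B7, one_mul]
    constructor
    · rintro ⟨v, h, hv, h1, h2⟩
      exact ⟨v, hv, h1⟩
    · rintro ⟨v, hv, h1⟩
      exact ⟨v, g, hv, h1, rfl⟩

/-- Lemma D: `X ∈ 𝒥(U)` implies `X × G ∈ 𝒥(U ⋈ G)`. -/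
theorem lemD (act : G → U → U) (res : G → U → G)
    (B1 : ∀ u : U, act 1 u = u)
    (B7 : ∀ u : U, res 1 u = 1)
    {X : Set U} (hX : X ∈ constructibles (fun x y : U => x * y)) :
    X ×ˢ (Set.univ : Set G)
      ∈ constructibles (fun x y : U × G => (x.1 * act x.2 y.1, res x.2 y.1 * y.2)) := by
  rw [constructibles_U_eq] at hX
  rw [constructibles_P_eq]
  rcases hX with rfl | ⟨l, rfl⟩
  · left; simp
  · right
    exact ⟨l.map (fun pq => ((pq.1, (1 : G)), (pq.2, (1 : G)))),
      (lemC act res B1 B7 l).symm⟩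

end ZSAux


/-- Let `U` be a left cancellative monoid and `G` a group equipped with a Zappa–Szép
datum (B1)–(B8) such that for all `u ∈ U`, `b ∈ G` there is `a ∈ G` with `a|_u = b`.
Then a finite subset `F ⊆ 𝒥(U)` is a foundation set of `𝒥(U)` if and only if
`{X × G : X ∈ F}` is a foundation set of `𝒥(U ⋈ G)`. -/
theorem foundationSet_zappaSzep_iff {U G : Type*} [Monoid U] [Group G]
    (hU : ∀ p x y : U, p * x = p * y → x = y)
    (act : G → U → U) (res : G → U → G)
    (B1 : ∀ u : U, act 1 u = u)
    (B2 : ∀ (g h : G) (u : U), act (g * h) u = act g (act h u))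
    (B3 : ∀ g : G, act g 1 = 1)
    (B4 : ∀ (g : G) (u v : U), act g (u * v) = act g u * act (res g u) v)
    (B5 : ∀ g : G, res g 1 = g)
    (B6 : ∀ (g : G) (u v : U), res g (u * v) = res (res g u) v)
    (B7 : ∀ u : U, res 1 u = 1)
    (B8 : ∀ (g h : G) (u : U), res (g * h) u = res g (act h u) * res h u)
    (hres : ∀ (u : U) (b : G), ∃ a : G, res a u = b)
    (F : Set (Set U)) (hFfin : F.Finite)
    (hFsub : F ⊆ constructibles (fun x y : U => x * y)) :
    IsFoundationSet (fun x y : U => x * y) F ↔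
      IsFoundationSet (fun x y : U × G => (x.1 * act x.2 y.1, res x.2 y.1 * y.2))
        ((fun X => X ×ˢ (Set.univ : Set G)) '' F) := by
  constructor
  · rintro ⟨-, -, hfound⟩
    refine ⟨hFfin.image _, ?_, ?_⟩
    · rintro - ⟨X, hX, rfl⟩
      exact ZSAux.lemD act res B1 B7 (hFsub hX)
    · intro Y hY hYne
      rw [ZSAux.constructibles_P_eq] at hY
      rcases hY with rfl | ⟨L, rfl⟩
      · exact absurd hYne (by simp)
      · obtain ⟨l, hl⟩ := ZSAux.lemB act res B1 B2 B4 B7 B8 hres L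
        rw [hl] at hYne ⊢
        have hZne : (l.foldr ZSAux.fU Set.univ).Nonempty :=
          ((Set.prod_nonempty_iff).mp hYne).1
        have hmem : l.foldr ZSAux.fU Set.univ ∈ constructibles (fun x y : U => x * y) := by
          rw [ZSAux.constructibles_U_eq]
          exact Set.mem_insert_iff.mpr (Or.inr ⟨l, rfl⟩)
        obtain ⟨X, hXF, hXZ⟩ := hfound (l.foldr ZSAux.fU Set.univ) hmem hZne
        refine ⟨X ×ˢ (Set.univ : Set G), ⟨X, hXF, rfl⟩, ?_⟩
        rw [Set.prod_inter_prod]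
        exact Set.prod_nonempty_iff.mpr ⟨hXZ, ⟨1, by simp⟩⟩
  · rintro ⟨-, -, hfound⟩
    refine ⟨hFfin, hFsub, ?_⟩
    intro Y hY hYne
    obtain ⟨X', hX'mem, hX'⟩ := hfound (Y ×ˢ (Set.univ : Set G))
      (ZSAux.lemD act res B1 B7 hY)
      (Set.prod_nonempty_iff.mpr ⟨hYne, Set.univ_nonempty⟩)
    obtain ⟨X, hXF, rfl⟩ := hX'mem
    refine ⟨X, hXF, ?_⟩
    rw [Set.prod_inter_prod] at hX'
    exact (Set.prod_nonempty_iff.mp hX').1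
end

section
/- Let k ≥ 1 and n : Fin k → ℕ with n i ≥ 1 for all i, and for p : Fin k → ℕ write n^p := ∏ i, (n i)^(p i). Let M be the monoid whose elements are pairs (m, p) with p : Fin k → ℕ and m ∈ ℕ, m < n^p, with multiplication (m,p)(m',p') = (m + n^p·m', p + p') and identity (0,0). Then M is right LCM (any two elements of M having a common right multiple have a right least common multiple) if and only if the n i are pairwise coprime. -/
/-- The underlying set of the single-vertex `k`-graph of the standard product of
odometers: pairs `(m, p)` with `p : Fin k → ℕ` and `m < n^p := ∏ i, (n i)^(p i)`. -/
def Odo (k : ℕ) (n : Fin k → ℕ) : Type :=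
  { x : ℕ × (Fin k → ℕ) // x.1 < ∏ i, (n i) ^ (x.2 i) }

/-- Multiplication `(m,p)(m',p') = (m + n^p·m', p + p')` on `Odo k n`. -/
def odoMul {k : ℕ} (n : Fin k → ℕ) (x y : Odo k n) : Odo k n :=
  ⟨(x.val.1 + (∏ i, (n i) ^ (x.val.2 i)) * y.val.1, fun i => x.val.2 i + y.val.2 i), by
    have hx := x.property
    have hy := y.property
    have hsplit : (∏ i, (n i) ^ (x.val.2 i + y.val.2 i)) =
        (∏ i, (n i) ^ (x.val.2 i)) * ∏ i, (n i) ^ (y.val.2 i) := by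
      rw [← Finset.prod_mul_distrib]
      exact Finset.prod_congr rfl fun i _ => pow_add _ _ _
    calc x.val.1 + (∏ i, (n i) ^ (x.val.2 i)) * y.val.1
        < (∏ i, (n i) ^ (x.val.2 i)) + (∏ i, (n i) ^ (x.val.2 i)) * y.val.1 :=
          Nat.add_lt_add_right hx _
      _ = (∏ i, (n i) ^ (x.val.2 i)) * (y.val.1 + 1) := by ring
      _ ≤ (∏ i, (n i) ^ (x.val.2 i)) * ∏ i, (n i) ^ (y.val.2 i) :=
          Nat.mul_le_mul_left _ hy
      _ = ∏ i, (n i) ^ (x.val.2 i + y.val.2 i) := hsplit.symm⟩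

/-- The identity `(0, 0)` of `Odo k n`. -/
def odoOne (k : ℕ) (n : Fin k → ℕ) : Odo k n :=
  ⟨(0, fun _ => 0), by simp⟩

/-- `w` is a right multiple of `x` in `Odo k n`. -/
def OdoRightMultiple {k : ℕ} (n : Fin k → ℕ) (w x : Odo k n) : Prop :=
  ∃ r : Odo k n, w = odoMul n x r

/-- `w` is a right least common multiple of `x` and `y` in `Odo k n`. -/
def OdoIsRightLCM {k : ℕ} (n : Fin k → ℕ) (w x y : Odo k n) : Prop :=
  OdoRightMultiple n w x ∧ OdoRightMultiple n w y ∧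
    ∀ w' : Odo k n, OdoRightMultiple n w' x → OdoRightMultiple n w' y →
      OdoRightMultiple n w' w

/-
Right multiples are read off coordinatewise: `w ∈ x · M` iff `d x ≤ d w` and `w.1 ≡ x.1`
modulo `n^(d x)`. So a common right multiple of `x` and `y` is a solution of two congruences,
modulo `n^(d x)` and `n^(d y)`. If the `n i` are pairwise coprime, `n^(d x ⊔ d y)` divides the
lcm of these two moduli, and any common multiple reduced modulo `n^(d x ⊔ d y)` in degree
`d x ⊔ d y` is a least one. Conversely, let `w` be a right LCM of `(0, eᵢ)` and `(0, eⱼ)`,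
`i ≠ j`. Since `(0, eᵢ + eⱼ)` is a common multiple, `w.1 = 0`; since `eᵢ + eⱼ ≤ d w`,
`n i * n j ∣ n^(d w)`. Hence `n i * n j` divides every `c < n i * n j` with `(c, eᵢ + eⱼ)` a
common multiple, i.e. every common multiple of `n i` and `n j` below `n i * n j`, which forces
`lcm (n i) (n j) = n i * n j`.
-/

open Finset Function

theorem Pi.single_add_single_le {ι M : Type*} [DecidableEq ι] [AddZeroClass M] [LE M]
    {i j : ι} (hij : i ≠ j) {a b : M} {p : ι → M} (hi : Pi.single i a ≤ p)
    (hj : Pi.single j b ≤ p) : Pi.single i a + Pi.single j b ≤ p := by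
  intro l
  by_cases hli : l = i
  · subst hli; simpa [hij] using hi l
  · simpa [hli] using hj l

section ProdPow

variable {ι M : Type*} [Fintype ι] [CommMonoid M] (f : ι → M)

theorem prod_pow_add (p q : ι → ℕ) :
    ∏ i, f i ^ (p i + q i) = (∏ i, f i ^ p i) * ∏ i, f i ^ q i := by
  simp only [pow_add, prod_mul_distrib]

theorem prod_pow_single [DecidableEq ι] (i : ι) (e : ℕ) :
    ∏ l, f l ^ Pi.single i e l = f i ^ e := by
  simp [Pi.single_apply, pow_ite]

theorem prod_pow_dvd_prod_pow {p q : ι → ℕ} (h : p ≤ q) :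
    ∏ i, f i ^ p i ∣ ∏ i, f i ^ q i :=
  prod_dvd_prod_of_dvd _ _ fun i _ => pow_dvd_pow _ (h i)

theorem prod_pow_sup_dvd [DecompositionMonoid M] {f : ι → M} (hf : Pairwise (IsRelPrime on f))
    {p q : ι → ℕ} {z : M} (hp : ∏ i, f i ^ p i ∣ z) (hq : ∏ i, f i ^ q i ∣ z) :
    ∏ i, f i ^ (p ⊔ q) i ∣ z := by
  refine Fintype.prod_dvd_of_isRelPrime (fun i j hij => (hf hij).pow) fun i => ?_
  rcases le_total (p i) (q i) with h | h
  · rw [Pi.sup_apply, sup_eq_right.2 h]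
    exact (dvd_prod_of_mem _ (mem_univ i)).trans hq
  · rw [Pi.sup_apply, sup_eq_left.2 h]
    exact (dvd_prod_of_mem _ (mem_univ i)).trans hp

end ProdPow

theorem Nat.coprime_of_forall_mul_dvd {a b : ℕ} (ha : 0 < a) (hb : 0 < b)
    (h : ∀ c < a * b, a ∣ c → b ∣ c → a * b ∣ c) : a.Coprime b := by
  have hab : 0 < a * b := Nat.mul_pos ha hb
  -- apply `h` to the common multiple `lcm a b % (a * b)`
  have hlt := Nat.mod_lt (a.lcm b) hab
  have hmod := Nat.eq_zero_of_dvd_of_lt (h _ hlt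
    ((Nat.dvd_mod_iff (dvd_mul_right a b)).2 (Nat.dvd_lcm_left a b))
    ((Nat.dvd_mod_iff (dvd_mul_left b a)).2 (Nat.dvd_lcm_right a b))) hlt
  have hlcm : a.lcm b = a * b :=
    Nat.dvd_antisymm (Nat.lcm_dvd_mul a b) (Nat.dvd_of_mod_eq_zero hmod)
  simpa [ha.ne', hb.ne'] using Nat.lcm_eq_mul_iff.1 hlcm

namespace Odo

variable {k : ℕ} {n : Fin k → ℕ}

theorem prod_pow_pos (x : Odo k n) : 0 < ∏ i, n i ^ x.val.2 i :=
  x.val.1.zero_le.trans_lt x.property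

theorem rightMultiple_iff {w x : Odo k n} :
    OdoRightMultiple n w x ↔
      x.val.2 ≤ w.val.2 ∧ w.val.1 % ∏ i, n i ^ x.val.2 i = x.val.1 := by
  constructor
  · rintro ⟨r, rfl⟩
    exact ⟨fun i => Nat.le_add_right _ _,
      by rw [odoMul, Nat.add_mul_mod_self_left, Nat.mod_eq_of_lt x.property]⟩
  · rintro ⟨hle, hmod⟩
    set N := ∏ i, n i ^ x.val.2 i
    have hsplit : ∏ i, n i ^ w.val.2 i = N * ∏ i, n i ^ (w.val.2 - x.val.2) i := by
      rw [← prod_pow_add]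
      exact prod_congr rfl fun i _ => by rw [Pi.sub_apply, Nat.add_sub_cancel' (hle i)]
    refine ⟨⟨(w.val.1 / N, w.val.2 - x.val.2), Nat.div_lt_of_lt_mul (hsplit ▸ w.property)⟩, ?_⟩
    refine Subtype.ext (Prod.ext ?_ (add_tsub_cancel_of_le hle).symm)
    exact (Nat.mod_add_div _ _).symm.trans (by rw [hmod]; rfl)

theorem exists_isRightLCM (hn : Pairwise (Nat.Coprime on n)) {w x y : Odo k n}
    (hx : OdoRightMultiple n w x) (hy : OdoRightMultiple n w y) :
    ∃ l, OdoIsRightLCM n l x y := by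
  rw [rightMultiple_iff] at hx hy
  set s := x.val.2 ⊔ y.val.2
  set N := ∏ i, n i ^ s i
  have hxN : ∏ i, n i ^ x.val.2 i ∣ N := prod_pow_dvd_prod_pow n le_sup_left
  have hyN : ∏ i, n i ^ y.val.2 i ∣ N := prod_pow_dvd_prod_pow n le_sup_right
  have hNw : N ∣ ∏ i, n i ^ w.val.2 i := prod_pow_dvd_prod_pow n (sup_le hx.1 hy.1)
  refine ⟨⟨(w.val.1 % N, s), Nat.mod_lt _ (Nat.pos_of_dvd_of_pos hNw w.prod_pow_pos)⟩,
    rightMultiple_iff.2 ⟨le_sup_left, (Nat.mod_mod_of_dvd _ hxN).trans hx.2⟩,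
    rightMultiple_iff.2 ⟨le_sup_right, (Nat.mod_mod_of_dvd _ hyN).trans hy.2⟩, ?_⟩
  intro v hvx hvy
  rw [rightMultiple_iff] at hvx hvy
  refine rightMultiple_iff.2 ⟨sup_le hvx.1 hvy.1, Nat.ModEq.of_dvd ?_
    (Nat.mod_lcm (hvx.2.trans hx.2.symm) (hvy.2.trans hy.2.symm))⟩
  exact prod_pow_sup_dvd (hn.mono fun _ _ => Nat.coprime_iff_isRelPrime.1)
    (Nat.dvd_lcm_left _ _) (Nat.dvd_lcm_right _ _)

theorem mul_dvd_of_rightLCM (hn : ∀ i, 1 ≤ n i)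
    (hlcm : ∀ x y : Odo k n, (∃ w, OdoRightMultiple n w x ∧ OdoRightMultiple n w y) →
      ∃ w, OdoIsRightLCM n w x y)
    {i j : Fin k} (hij : i ≠ j) {c : ℕ} (hc : c < n i * n j) (hi : n i ∣ c) (hj : n j ∣ c) :
    n i * n j ∣ c := by
  have hprod (l : Fin k) : ∏ m, n m ^ Pi.single l 1 m = n l := by
    rw [prod_pow_single, pow_one]
  have hprod₂ : ∏ m, n m ^ (Pi.single i 1 + Pi.single j 1 : Fin k → ℕ) m = n i * n j := by
    rw [← hprod i, ← hprod j, ← prod_pow_add]; rfl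
  let x : Odo k n := ⟨(0, Pi.single i 1), (hprod i).symm ▸ hn i⟩
  let y : Odo k n := ⟨(0, Pi.single j 1), (hprod j).symm ▸ hn j⟩
  let z (a : ℕ) (ha : a < n i * n j) : Odo k n :=
    ⟨(a, Pi.single i 1 + Pi.single j 1), hprod₂ ▸ ha⟩
  have hz (a : ℕ) (ha : a < n i * n j) (hia : n i ∣ a) (hja : n j ∣ a) :
      OdoRightMultiple n (z a ha) x ∧ OdoRightMultiple n (z a ha) y := by
    simp only [rightMultiple_iff]
    refine ⟨⟨le_add_of_nonneg_right bot_le, ?_⟩, ⟨le_add_of_nonneg_left bot_le, ?_⟩⟩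
    · exact (hprod i).symm ▸ Nat.mod_eq_zero_of_dvd hia
    · exact (hprod j).symm ▸ Nat.mod_eq_zero_of_dvd hja
  have hz₀ := hz 0 (Nat.mul_pos (hn i) (hn j)) (dvd_zero _) (dvd_zero _)
  obtain ⟨w, hwx, hwy, hw⟩ := hlcm x y ⟨_, hz₀⟩
  have hw0 : w.val.1 = 0 :=
    (rightMultiple_iff.1 (hw _ hz₀.1 hz₀.2)).2.symm.trans (Nat.zero_mod _)
  have hdw : n i * n j ∣ ∏ m, n m ^ w.val.2 m := hprod₂ ▸ prod_pow_dvd_prod_pow n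
    (Pi.single_add_single_le hij (rightMultiple_iff.1 hwx).1 (rightMultiple_iff.1 hwy).1)
  have hcw := (rightMultiple_iff.1 (hw _ (hz c hc hi hj).1 (hz c hc hi hj).2)).2
  exact hdw.trans (Nat.dvd_of_mod_eq_zero (hcw.trans hw0))

end Odo

theorem odo_rightLCM_iff_pairwise_coprime_general (k : ℕ)
    (n : Fin k → ℕ) (hn : ∀ i, 1 ≤ n i) :
    (∀ x y : Odo k n, (∃ w, OdoRightMultiple n w x ∧ OdoRightMultiple n w y) →
      ∃ w, OdoIsRightLCM n w x y) ↔
      ∀ i j : Fin k, i ≠ j → Nat.gcd (n i) (n j) = 1 :=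
  ⟨fun hlcm _ _ hij => Nat.coprime_of_forall_mul_dvd (hn _) (hn _)
      fun _ hc => Odo.mul_dvd_of_rightLCM hn hlcm hij hc,
    fun hcop _ _ ⟨_, hx, hy⟩ => Odo.exists_isRightLCM hcop hx hy⟩

/-- The monoid `Odo k n` is right LCM (any two elements having a common right multiple
have a right least common multiple) if and only if the `n i` are pairwise coprime. -/
theorem odo_rightLCM_iff_pairwise_coprime (k : ℕ) (hk : 1 ≤ k)
    (n : Fin k → ℕ) (hn : ∀ i, 1 ≤ n i) :
    (∀ x y : Odo k n, (∃ w, OdoRightMultiple n w x ∧ OdoRightMultiple n w y) →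
      ∃ w, OdoIsRightLCM n w x y) ↔
      ∀ i j : Fin k, i ≠ j → Nat.gcd (n i) (n j) = 1 :=
  odo_rightLCM_iff_pairwise_coprime_general k n hn
end

section
/- Let k ≥ 1 and n : Fin k → ℕ with n i ≥ 1 for all i, and for p : Fin k → ℕ write n^p := ∏ i, (n i)^(p i). Let M be the monoid whose elements are pairs (m, p) with p : Fin k → ℕ and m ∈ ℕ, m < n^p, with multiplication (m,p)(m',p') = (m + n^p·m', p + p') and identity (0,0). For N ∈ ℤ define N·(m,p) := (r, p) where r is the unique representative in [0, n^p) of (m + N) mod n^p, and define N|_{(m,p)} := (m + N − r)/n^p ∈ ℤ (floor division of m + N by n^p). Then these maps satisfy the Zappa–Szép conditions (B1)–(B8) in additive form: 0·x = x; (N+N')·x = N·(N'·x); N·(0,0) = (0,0); N·(xy) = (N·x)((N|_x)·y); N|_{(0,0)} = N; N|_{xy} = (N|_x)|_y; 0|_x = 0; (N+N')|_x = N|_{N'·x} + N'|_x, for all N, N' ∈ ℤ and x, y ∈ M. -/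
/-- The odometer action of `N ∈ ℤ` on `Odo k n`: `N·(m,p) = (r, p)` where `r` is the
representative in `[0, n^p)` of `(m + N) mod n^p`. -/
def odoAct {k : ℕ} (n : Fin k → ℕ) (N : ℤ) (x : Odo k n) : Odo k n :=
  ⟨((((x.val.1 : ℤ) + N).emod ((∏ i, (n i) ^ (x.val.2 i) : ℕ) : ℤ)).toNat, x.val.2), by
    have hx := x.property
    have hP : 0 < ∏ i, (n i) ^ (x.val.2 i) := Nat.lt_of_le_of_lt (Nat.zero_le _) hx
    have h1 : (0 : ℤ) ≤ ((x.val.1 : ℤ) + N).emod ((∏ i, (n i) ^ (x.val.2 i) : ℕ) : ℤ) :=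
      Int.emod_nonneg _ (by exact_mod_cast hP.ne')
    have h2 : ((x.val.1 : ℤ) + N).emod ((∏ i, (n i) ^ (x.val.2 i) : ℕ) : ℤ) <
        ((∏ i, (n i) ^ (x.val.2 i) : ℕ) : ℤ) :=
      Int.emod_lt_of_pos _ (by exact_mod_cast hP)
    show ((((x.val.1 : ℤ) + N).emod ((∏ i, (n i) ^ (x.val.2 i) : ℕ) : ℤ)).toNat) <
      ∏ i, (n i) ^ (x.val.2 i)
    omega⟩

/-- The odometer restriction `N|_{(m,p)} = (m + N − r)/n^p ∈ ℤ`, i.e. the floor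
(Euclidean) quotient of `m + N` by `n^p`. -/
def odoRes {k : ℕ} (n : Fin k → ℕ) (N : ℤ) (x : Odo k n) : ℤ :=
  ((x.val.1 : ℤ) + N).ediv ((∏ i, (n i) ^ (x.val.2 i) : ℕ) : ℤ)


private lemma odo_key_mod (r s P Q : ℤ) (hP : 0 < P) (hQ : 0 < Q)
    (hr0 : 0 ≤ r) (hr : r < P) : (r + P * s) % (P * Q) = r + P * (s % Q) := by
  have hrw : r + P * s = (r + P * (s % Q)) + (P * Q) * (s / Q) := by
    have h := Int.emod_add_mul_ediv s Q
    nlinarith [h]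
  rw [hrw, Int.add_mul_emod_self_left]
  have h0 : 0 ≤ s % Q := Int.emod_nonneg _ hQ.ne'
  have h1 : s % Q < Q := Int.emod_lt_of_pos _ hQ
  exact Int.emod_eq_of_lt (by nlinarith) (by nlinarith)

private lemma odo_key_div (r s P Q : ℤ) (hP : 0 < P) (hQ : 0 < Q)
    (hr0 : 0 ≤ r) (hr : r < P) : (r + P * s) / (P * Q) = s / Q := by
  have hrw : r + P * s = (r + P * (s % Q)) + (P * Q) * (s / Q) := by
    have h := Int.emod_add_mul_ediv s Q
    nlinarith [h]
  have h0 : 0 ≤ s % Q := Int.emod_nonneg _ hQ.ne'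
  have h1 : s % Q < Q := Int.emod_lt_of_pos _ hQ
  rw [hrw, Int.add_mul_ediv_left _ _ (by positivity : P * Q ≠ 0),
    Int.ediv_eq_zero_of_lt (by nlinarith) (by nlinarith), zero_add]

private lemma odo_mod_shift (a N P : ℤ) (hP : 0 < P) :
    (a % P + N) % P = (a + N) % P := by
  conv_rhs => rw [← Int.emod_add_mul_ediv a P]
  rw [show a % P + P * (a / P) + N = (a % P + N) + P * (a / P) by ring,
    Int.add_mul_emod_self_left]

private lemma odo_div_shift (a N P : ℤ) (hP : 0 < P) :
    (a + N) / P = (a % P + N) / P + a / P := by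
  conv_lhs => rw [← Int.emod_add_mul_ediv a P]
  rw [show a % P + P * (a / P) + N = (a % P + N) + P * (a / P) by ring,
    Int.add_mul_ediv_left _ _ hP.ne']

/-- The extension of the odometer actions to the single-vertex `k`-graph `Odo k n`
satisfies the Zappa–Szép conditions (B1)–(B8) in additive form; hence the standard
product of odometers `F_θ⁺ ⋈ ℤ` is a well-defined Zappa–Szép product. -/
theorem odo_zappaSzep_conditions (k : ℕ) (hk : 1 ≤ k)
    (n : Fin k → ℕ) (hn : ∀ i, 1 ≤ n i) :
    (∀ x : Odo k n, odoAct n 0 x = x) ∧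
    (∀ (N N' : ℤ) (x : Odo k n), odoAct n (N + N') x = odoAct n N (odoAct n N' x)) ∧
    (∀ N : ℤ, odoAct n N (odoOne k n) = odoOne k n) ∧
    (∀ (N : ℤ) (x y : Odo k n),
      odoAct n N (odoMul n x y) = odoMul n (odoAct n N x) (odoAct n (odoRes n N x) y)) ∧
    (∀ N : ℤ, odoRes n N (odoOne k n) = N) ∧
    (∀ (N : ℤ) (x y : Odo k n),
      odoRes n N (odoMul n x y) = odoRes n (odoRes n N x) y) ∧
    (∀ x : Odo k n, odoRes n 0 x = 0) ∧
    (∀ (N N' : ℤ) (x : Odo k n),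
      odoRes n (N + N') x = odoRes n N (odoAct n N' x) + odoRes n N' x) := by
  have hPpos : ∀ p : Fin k → ℕ, 0 < ∏ i, (n i) ^ (p i) := fun p =>
    Finset.prod_pos fun i _ => pow_pos (hn i) _
  have hPZ : ∀ p : Fin k → ℕ, (0 : ℤ) < ((∏ i, (n i) ^ (p i) : ℕ) : ℤ) := fun p => by
    exact_mod_cast hPpos p
  have hsplit : ∀ p q : Fin k → ℕ,
      ((∏ i, (n i) ^ (p i + q i) : ℕ) : ℤ) =
        ((∏ i, (n i) ^ (p i) : ℕ) : ℤ) * ((∏ i, (n i) ^ (q i) : ℕ) : ℤ) := by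
    intro p q
    push_cast [← Finset.prod_mul_distrib]
    exact Finset.prod_congr rfl fun i _ => by push_cast [pow_add]; ring
  have hmodnn : ∀ (a P : ℤ), 0 < P → 0 ≤ a % P := fun a P hP => Int.emod_nonneg _ hP.ne'
  refine ⟨?_, ?_, ?_, ?_, ?_, ?_, ?_, ?_⟩
  · -- B1
    intro x
    apply Subtype.ext
    apply Prod.ext
    · show ((((x.val.1 : ℤ) + 0) % _).toNat) = x.val.1
      have hx : (x.val.1 : ℤ) < ((∏ i, (n i) ^ (x.val.2 i) : ℕ) : ℤ) := by
        exact_mod_cast x.property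
      rw [add_zero, Int.emod_eq_of_lt (by positivity) hx]
      simp
    · rfl
  · -- B2
    intro N N' x
    apply Subtype.ext
    apply Prod.ext
    · set P := ((∏ i, (n i) ^ (x.val.2 i) : ℕ) : ℤ) with hPdef
      have hP : 0 < P := hPZ _
      show (((x.val.1 : ℤ) + (N + N')) % P).toNat =
        (((((((x.val.1 : ℤ) + N') % P).toNat : ℕ) : ℤ) + N) % P).toNat
      rw [Int.toNat_of_nonneg (hmodnn _ _ hP), odo_mod_shift _ _ _ hP]
      ring_nf
    · rfl
  · -- B3
    intro N
    apply Subtype.ext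
    apply Prod.ext
    · show (((0 : ℤ) + N) % ((∏ i, (n i) ^ (0 : ℕ) : ℕ) : ℤ)).toNat = 0
      simp
    · rfl
  · -- B4
    intro N x y
    obtain ⟨⟨m, p⟩, hx⟩ := x
    obtain ⟨⟨m', q⟩, hy⟩ := y
    apply Subtype.ext
    apply Prod.ext
    · have hP : (0 : ℤ) < ((∏ i, (n i) ^ (p i) : ℕ) : ℤ) := hPZ p
      have hQ : (0 : ℤ) < ((∏ i, (n i) ^ (q i) : ℕ) : ℤ) := hPZ q
      show ((((m + (∏ i, (n i) ^ (p i)) * m' : ℕ) : ℤ) + N) %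
          ((∏ i, (n i) ^ (p i + q i) : ℕ) : ℤ)).toNat =
        (((m : ℤ) + N) % ((∏ i, (n i) ^ (p i) : ℕ) : ℤ)).toNat +
          (∏ i, (n i) ^ (p i)) *
            ((((m' : ℤ) + ((m : ℤ) + N) / ((∏ i, (n i) ^ (p i) : ℕ) : ℤ)) %
              ((∏ i, (n i) ^ (q i) : ℕ) : ℤ))).toNat
      have h2 : (((m + (∏ i, (n i) ^ (p i)) * m' : ℕ) : ℤ) + N) %
          ((∏ i, (n i) ^ (p i + q i) : ℕ) : ℤ) =
          ((m : ℤ) + N) % ((∏ i, (n i) ^ (p i) : ℕ) : ℤ) +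
            ((∏ i, (n i) ^ (p i) : ℕ) : ℤ) *
              (((m' : ℤ) + ((m : ℤ) + N) / ((∏ i, (n i) ^ (p i) : ℕ) : ℤ)) %
                ((∏ i, (n i) ^ (q i) : ℕ) : ℤ)) := by
        rw [hsplit p q, Nat.cast_add, Nat.cast_mul]
        have h1 : (m : ℤ) + ((∏ i, (n i) ^ (p i) : ℕ) : ℤ) * (m' : ℤ) + N =
            ((m : ℤ) + N) % ((∏ i, (n i) ^ (p i) : ℕ) : ℤ) +
              ((∏ i, (n i) ^ (p i) : ℕ) : ℤ) *
                ((m' : ℤ) + ((m : ℤ) + N) / ((∏ i, (n i) ^ (p i) : ℕ) : ℤ)) := by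
          have := Int.emod_add_mul_ediv ((m : ℤ) + N) ((∏ i, (n i) ^ (p i) : ℕ) : ℤ)
          nlinarith [this]
        rw [h1]
        exact odo_key_mod _ _ _ _ hP hQ (hmodnn _ _ hP) (Int.emod_lt_of_pos _ hP)
      have hA := hmodnn ((m : ℤ) + N) _ hP
      have hB := hmodnn ((m' : ℤ) + ((m : ℤ) + N) / ((∏ i, (n i) ^ (p i) : ℕ) : ℤ)) _ hQ
      have hX := hmodnn (((m + (∏ i, (n i) ^ (p i)) * m' : ℕ) : ℤ) + N)
        ((∏ i, (n i) ^ (p i + q i) : ℕ) : ℤ) (hPZ _)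
      have hC : ((∏ i, (n i) ^ (p i) : ℕ) : ℤ) *
          (((m' : ℤ) + ((m : ℤ) + N) / ((∏ i, (n i) ^ (p i) : ℕ) : ℤ)) %
            ((∏ i, (n i) ^ (q i) : ℕ) : ℤ)) =
          (((∏ i, (n i) ^ (p i)) *
            ((((m' : ℤ) + ((m : ℤ) + N) / ((∏ i, (n i) ^ (p i) : ℕ) : ℤ)) %
              ((∏ i, (n i) ^ (q i) : ℕ) : ℤ))).toNat : ℕ) : ℤ) := by
        rw [Nat.cast_mul, Int.toNat_of_nonneg hB]
      omega
    · rfl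
  · -- B5
    intro N
    show ((0 : ℤ) + N) / ((∏ i, (n i) ^ (0 : ℕ) : ℕ) : ℤ) = N
    simp
  · -- B6
    intro N x y
    obtain ⟨⟨m, p⟩, hx⟩ := x
    obtain ⟨⟨m', q⟩, hy⟩ := y
    have hP : (0 : ℤ) < ((∏ i, (n i) ^ (p i) : ℕ) : ℤ) := hPZ p
    have hQ : (0 : ℤ) < ((∏ i, (n i) ^ (q i) : ℕ) : ℤ) := hPZ q
    show (((m + (∏ i, (n i) ^ (p i)) * m' : ℕ) : ℤ) + N) /
        ((∏ i, (n i) ^ (p i + q i) : ℕ) : ℤ) =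
      ((m' : ℤ) + ((m : ℤ) + N) / ((∏ i, (n i) ^ (p i) : ℕ) : ℤ)) /
        ((∏ i, (n i) ^ (q i) : ℕ) : ℤ)
    rw [hsplit p q, Nat.cast_add, Nat.cast_mul]
    have h1 : (m : ℤ) + ((∏ i, (n i) ^ (p i) : ℕ) : ℤ) * (m' : ℤ) + N =
        ((m : ℤ) + N) % ((∏ i, (n i) ^ (p i) : ℕ) : ℤ) +
          ((∏ i, (n i) ^ (p i) : ℕ) : ℤ) *
            ((m' : ℤ) + ((m : ℤ) + N) / ((∏ i, (n i) ^ (p i) : ℕ) : ℤ)) := by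
      have := Int.emod_add_mul_ediv ((m : ℤ) + N) ((∏ i, (n i) ^ (p i) : ℕ) : ℤ)
      nlinarith [this]
    rw [h1]
    exact odo_key_div _ _ _ _ hP hQ (hmodnn _ _ hP) (Int.emod_lt_of_pos _ hP)
  · -- B7
    intro x
    show ((x.val.1 : ℤ) + 0) / ((∏ i, (n i) ^ (x.val.2 i) : ℕ) : ℤ) = 0
    rw [add_zero]
    exact Int.ediv_eq_zero_of_lt (by positivity) (by exact_mod_cast x.property)
  · -- B8
    intro N N' x
    set P := ((∏ i, (n i) ^ (x.val.2 i) : ℕ) : ℤ) with hPdef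
    have hP : 0 < P := hPZ _
    show ((x.val.1 : ℤ) + (N + N')) / P =
      ((((((x.val.1 : ℤ) + N') % P).toNat : ℕ) : ℤ) + N) / P + ((x.val.1 : ℤ) + N') / P
    rw [Int.toNat_of_nonneg (hmodnn _ _ hP),
      show (x.val.1 : ℤ) + (N + N') = ((x.val.1 : ℤ) + N') + N by ring,
      odo_div_shift _ _ _ hP]
end

section
/- Let k ≥ 1 and n : Fin k → ℕ with n i ≥ 1 for all i, and let M be the monoid whose elements are pairs (m, p) with p : Fin k → ℕ and m < n^p (where n^p := ∏ i, (n i)^(p i)), with multiplication (m,p)(m',p') = (m + n^p·m', p + p'). Then every nonempty constructible right ideal of M is a finite union of principal right ideals of a common degree: for every nonempty X ∈ 𝒥(M) there exist p : Fin k → ℕ and a nonempty finite set S ⊆ {0, 1, …, n^p − 1} such that X = ⋃_{m ∈ S} (m,p)·M. -/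
/-!
Membership in a principal right ideal is arithmetic: `z ∈ x·M` iff `deg x ≤ deg z` and
`z.1 ≡ x.1 (mod n^(deg x))`. Consider unions of principal right ideals `x·M` with all
`deg x = p`. Left translation by `b` turns such a union into one of degree `deg b + p`.
For `q⁻¹`: if `qz ∈ x·M` with `deg x = p`, factor `z = c·w` with `deg c = p - deg q` (the
factorisation property of the `k`-graph); since `deg (qc) ≥ p`, `qz = (qc)w` has the same residue
modulo `n^p` as `qc`, so already `qc ∈ x·M`, and `q⁻¹X` is a union of degree `p - deg q`.
Hence every constructible ideal is such a union, and there are only finitely many elements of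
each degree.
-/

namespace Odo

variable {k : ℕ} {n : Fin k → ℕ}

theorem prod_pow_add (p q : Fin k → ℕ) :
    ∏ i, n i ^ (p i + q i) = (∏ i, n i ^ p i) * ∏ i, n i ^ q i := by
  simp only [pow_add, Finset.prod_mul_distrib]

theorem prod_pow_dvd_prod_pow {p q : Fin k → ℕ} (h : p ≤ q) :
    ∏ i, n i ^ p i ∣ ∏ i, n i ^ q i :=
  Finset.prod_dvd_prod_of_dvd _ _ fun i _ => pow_dvd_pow _ (h i)

theorem ext_val {x y : Odo k n} (h₁ : x.val.1 = y.val.1) (h₂ : x.val.2 = y.val.2) : x = y :=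
  Subtype.ext (Prod.ext h₁ h₂)

theorem odoMul_val_fst (x y : Odo k n) :
    (odoMul n x y).val.1 = x.val.1 + (∏ i, n i ^ x.val.2 i) * y.val.1 := rfl

theorem odoMul_val_snd (x y : Odo k n) : (odoMul n x y).val.2 = x.val.2 + y.val.2 := rfl

theorem odoMul_assoc (x y z : Odo k n) :
    odoMul n (odoMul n x y) z = odoMul n x (odoMul n y z) :=
  ext_val (by simp only [odoMul_val_fst, odoMul_val_snd, Pi.add_apply, prod_pow_add]; ring)
    (add_assoc _ _ _)

theorem odoOne_mul (x : Odo k n) : odoMul n (odoOne k n) x = x :=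
  ext_val (show 0 + (∏ i, n i ^ 0) * x.val.1 = x.val.1 by simp) (zero_add _)

theorem exists_odoMul_eq_of_le (z : Odo k n) {r : Fin k → ℕ} (hr : r ≤ z.val.2) :
    ∃ c w : Odo k n, c.val.2 = r ∧ odoMul n c w = z := by
  set N := ∏ i, n i ^ r i
  have hz : z.val.1 < N * ∏ i, n i ^ (z.val.2 i - r i) := by
    rw [← prod_pow_add]
    simpa only [Nat.add_sub_cancel' (hr _)] using z.property
  have hN : 0 < N := Nat.pos_of_ne_zero fun h => by simp [h] at hz
  exact ⟨⟨(z.val.1 % N, r), Nat.mod_lt _ hN⟩, ⟨(z.val.1 / N, z.val.2 - r), Nat.div_lt_of_lt_mul hz⟩,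
    rfl, ext_val (Nat.mod_add_div _ _) (add_tsub_cancel_of_le hr)⟩

theorem odoMul_val_fst_mod {x : Odo k n} {q : Fin k → ℕ} (hq : q ≤ x.val.2) (w : Odo k n) :
    (odoMul n x w).val.1 % ∏ i, n i ^ q i = x.val.1 % ∏ i, n i ^ q i := by
  obtain ⟨t, ht⟩ := prod_pow_dvd_prod_pow (n := n) hq
  rw [odoMul_val_fst, ht, mul_assoc, Nat.add_mul_mod_self_left]

theorem mem_range_odoMul_iff {x z : Odo k n} :
    z ∈ Set.range (odoMul n x) ↔
      x.val.2 ≤ z.val.2 ∧ z.val.1 % ∏ i, n i ^ x.val.2 i = x.val.1 := by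
  constructor
  · rintro ⟨w, rfl⟩
    exact ⟨fun i => Nat.le_add_right _ _,
      by rw [odoMul_val_fst_mod le_rfl, Nat.mod_eq_of_lt x.property]⟩
  · rintro ⟨hle, hmod⟩
    obtain ⟨c, w, hc, rfl⟩ := exists_odoMul_eq_of_le z hle
    have hcx : c = x := ext_val (by
      rw [← hmod, ← hc, odoMul_val_fst_mod le_rfl, Nat.mod_eq_of_lt c.property]) hc
    exact ⟨w, hcx ▸ rfl⟩

theorem odoMul_mem_range_of_mem {y z : Odo k n} (h : z ∈ Set.range (odoMul n y)) (w : Odo k n) :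
    odoMul n z w ∈ Set.range (odoMul n y) := by
  obtain ⟨u, rfl⟩ := h
  exact ⟨odoMul n u w, (odoMul_assoc y u w).symm⟩

theorem odoMul_mem_range_of_odoMul_odoMul_mem {a c w y : Odo k n}
    (h : odoMul n a (odoMul n c w) ∈ Set.range (odoMul n y))
    (hy : y.val.2 ≤ a.val.2 + c.val.2) :
    odoMul n a c ∈ Set.range (odoMul n y) := by
  rw [← odoMul_assoc, mem_range_odoMul_iff, odoMul_val_fst_mod (x := odoMul n a c) hy] at h
  exact mem_range_odoMul_iff.2 ⟨hy, h.2⟩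

theorem image_range_odoMul (b x : Odo k n) :
    odoMul n b '' Set.range (odoMul n x) = Set.range (odoMul n (odoMul n b x)) := by
  rw [← Set.range_comp]
  exact congrArg Set.range (funext fun w => (odoMul_assoc b x w).symm)

theorem finite_setOf_val_snd_eq (p : Fin k → ℕ) : {x : Odo k n | x.val.2 = p}.Finite := by
  refine (((Set.finite_Iio (∏ i, n i ^ p i)).prod (Set.finite_singleton p)).preimage
    Subtype.val_injective.injOn).subset ?_
  rintro x rfl
  exact ⟨x.property, rfl⟩

def IsUnionPrincipalOfDegree (p : Fin k → ℕ) (X : Set (Odo k n)) : Prop :=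
  ∃ S : Set (Odo k n), (∀ x ∈ S, x.val.2 = p) ∧ X = ⋃ x ∈ S, Set.range (odoMul n x)

theorem isUnionPrincipalOfDegree_univ : IsUnionPrincipalOfDegree 0 (Set.univ : Set (Odo k n)) :=
  ⟨{odoOne k n}, by rintro x rfl; rfl, by
    rw [Set.biUnion_singleton, Function.Surjective.range_eq fun z => ⟨z, odoOne_mul z⟩]⟩

namespace IsUnionPrincipalOfDegree

variable {p : Fin k → ℕ} {X : Set (Odo k n)}

theorem odoMul_mem (hX : IsUnionPrincipalOfDegree p X) {x : Odo k n} (hx : x ∈ X)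
    (w : Odo k n) : odoMul n x w ∈ X := by
  obtain ⟨S, -, rfl⟩ := hX
  obtain ⟨y, hy, hxy⟩ := Set.mem_iUnion₂.1 hx
  exact Set.mem_iUnion₂.2 ⟨y, hy, odoMul_mem_range_of_mem hxy w⟩

theorem image (hX : IsUnionPrincipalOfDegree p X) (b : Odo k n) :
    IsUnionPrincipalOfDegree (b.val.2 + p) (odoMul n b '' X) := by
  obtain ⟨S, hS, rfl⟩ := hX
  refine ⟨odoMul n b '' S, ?_, ?_⟩
  · rintro _ ⟨x, hx, rfl⟩
    rw [odoMul_val_snd, hS x hx]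
  · rw [Set.image_iUnion₂, Set.biUnion_image]
    simp only [image_range_odoMul]

theorem preimage (hX : IsUnionPrincipalOfDegree p X) (a : Odo k n) :
    IsUnionPrincipalOfDegree (p - a.val.2) (odoMul n a ⁻¹' X) := by
  obtain ⟨S, hS, hXS⟩ := id hX
  refine ⟨{c | c.val.2 = p - a.val.2 ∧ odoMul n a c ∈ X}, fun c hc => hc.1, ?_⟩
  ext z
  simp only [Set.mem_preimage, Set.mem_iUnion, Set.mem_ofPred_eq, exists_prop]
  constructor
  · intro hz
    obtain ⟨x, hx, hazx⟩ := Set.mem_iUnion₂.1 (hXS ▸ hz)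
    have hle : p ≤ a.val.2 + z.val.2 := hS x hx ▸ (mem_range_odoMul_iff.1 hazx).1
    obtain ⟨c, w, hc, rfl⟩ := exists_odoMul_eq_of_le z (tsub_le_iff_left.2 hle)
    have hac : odoMul n a c ∈ Set.range (odoMul n x) :=
      odoMul_mem_range_of_odoMul_odoMul_mem hazx (by rw [hc, hS x hx]; exact le_add_tsub)
    exact ⟨c, ⟨hc, hXS ▸ Set.mem_iUnion₂.2 ⟨x, hx, hac⟩⟩, w, rfl⟩
  · rintro ⟨c, ⟨-, hac⟩, w, rfl⟩
    rw [← odoMul_assoc]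
    exact hX.odoMul_mem hac w

end IsUnionPrincipalOfDegree

theorem exists_isUnionPrincipalOfDegree {X : Set (Odo k n)}
    (hX : X ∈ constructibles (odoMul n)) : ∃ p, IsUnionPrincipalOfDegree p X := by
  obtain rfl | ⟨l, rfl⟩ := hX
  · exact ⟨0, ∅, by simp, by simp⟩
  induction l with
  | nil => exact ⟨0, isUnionPrincipalOfDegree_univ⟩
  | cons ab l ih =>
    obtain ⟨p, hp⟩ := ih
    exact ⟨_, (hp.image ab.2).preimage ab.1⟩

end Odo

theorem odo_constructible_eq_union_principal_general (k : ℕ)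
    (n : Fin k → ℕ) :
    ∀ X ∈ constructibles (odoMul n), X.Nonempty →
      ∃ (p : Fin k → ℕ) (S : Set (Odo k n)), S.Finite ∧ S.Nonempty ∧
        (∀ x ∈ S, x.val.2 = p) ∧ X = ⋃ x ∈ S, Set.range (odoMul n x) := by
  intro X hX hne
  obtain ⟨p, S, hS, rfl⟩ := Odo.exists_isUnionPrincipalOfDegree hX
  obtain ⟨z, hz⟩ := hne
  obtain ⟨x, hx, -⟩ := Set.mem_iUnion₂.1 hz
  exact ⟨p, S, (Odo.finite_setOf_val_snd_eq p).subset hS, ⟨x, hx⟩, hS, rfl⟩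

/-- Every nonempty constructible right ideal of the monoid `Odo k n` is a finite union
of principal right ideals of a common degree: there are `p : Fin k → ℕ` and a nonempty
finite set `S` of elements, all of degree `p`, with `X = ⋃_{x ∈ S} x·M`. -/
theorem odo_constructible_eq_union_principal (k : ℕ) (hk : 1 ≤ k)
    (n : Fin k → ℕ) (hn : ∀ i, 1 ≤ n i) :
    ∀ X ∈ constructibles (odoMul n), X.Nonempty →
      ∃ (p : Fin k → ℕ) (S : Set (Odo k n)), S.Finite ∧ S.Nonempty ∧
        (∀ x ∈ S, x.val.2 = p) ∧ X = ⋃ x ∈ S, Set.range (odoMul n x) :=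
  odo_constructible_eq_union_principal_general k n
end

section
/- Let k ≥ 1 and n : Fin k → ℕ with n i ≥ 1 for all i, and let M be the monoid whose elements are pairs (m, p) with p : Fin k → ℕ and m < n^p (where n^p := ∏ i, (n i)^(p i)), with multiplication (m,p)(m',p') = (m + n^p·m', p + p'). Then for every finite subset F ⊆ M, the family { x·M : x ∈ F } of principal right ideals is a foundation set of 𝒥(M) if and only if F is exhaustive, i.e. for every y ∈ M there exists x ∈ F with (x·M) ∩ (y·M) ≠ ∅. -/
lemma odo_pow_add {k : ℕ} (n : Fin k → ℕ) (p q : Fin k → ℕ) :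
    (∏ i, n i ^ (p i + q i)) = (∏ i, n i ^ p i) * ∏ i, n i ^ q i := by
  rw [← Finset.prod_mul_distrib]
  exact Finset.prod_congr rfl fun i _ => pow_add _ _ _

lemma odoMul_assoc {k : ℕ} (n : Fin k → ℕ) (x y z : Odo k n) :
    odoMul n (odoMul n x y) z = odoMul n x (odoMul n y z) := by
  apply Subtype.ext
  refine Prod.ext ?_ ?_
  · show (x.val.1 + (∏ i, n i ^ x.val.2 i) * y.val.1) +
        (∏ i, n i ^ (x.val.2 i + y.val.2 i)) * z.val.1 =
      x.val.1 + (∏ i, n i ^ x.val.2 i) *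
        (y.val.1 + (∏ i, n i ^ y.val.2 i) * z.val.1)
    rw [odo_pow_add]; ring
  · funext i; exact add_assoc _ _ _

lemma odoMul_one_left {k : ℕ} (n : Fin k → ℕ) (x : Odo k n) :
    odoMul n (odoOne k n) x = x := by
  apply Subtype.ext
  refine Prod.ext ?_ ?_
  · show 0 + (∏ i, n i ^ (0 : ℕ)) * x.val.1 = x.val.1
    simp
  · funext i; exact zero_add _

lemma odo_foldr_right_ideal {k : ℕ} (n : Fin k → ℕ)
    (l : List (Odo k n × Odo k n)) :
    ∀ x ∈ l.foldr
        (fun pq Y => {x | odoMul n pq.1 x ∈ (fun y => odoMul n pq.2 y) '' Y})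
        Set.univ,
      ∀ a, odoMul n x a ∈ l.foldr
        (fun pq Y => {x | odoMul n pq.1 x ∈ (fun y => odoMul n pq.2 y) '' Y})
        Set.univ := by
  induction l with
  | nil => simp
  | cons pq l ih =>
    intro x hx a
    simp only [List.foldr_cons, Set.mem_setOf_eq] at hx ⊢
    obtain ⟨y, hy, hxy⟩ := hx
    exact ⟨odoMul n y a, ih y hy a, by
      simp only at hxy ⊢
      rw [← odoMul_assoc, ← odoMul_assoc, hxy]⟩

lemma odo_range_constructible {k : ℕ} (n : Fin k → ℕ) (x : Odo k n) :
    Set.range (odoMul n x) ∈ constructibles (odoMul n) := by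
  refine Set.mem_insert_iff.mpr (Or.inr ⟨[(odoOne k n, x)], ?_⟩)
  ext z
  simp [odoMul_one_left, Set.image_univ]

/-- For a finite subset `F` of the monoid `Odo k n`, the family `{x·M : x ∈ F}` of
principal right ideals is a foundation set of `𝒥(M)` if and only if `F` is
exhaustive, i.e. for every `y ∈ M` there is `x ∈ F` with `x·M ∩ y·M ≠ ∅`. -/
theorem odo_foundation_iff_exhaustive (k : ℕ) (hk : 1 ≤ k)
    (n : Fin k → ℕ) (hn : ∀ i, 1 ≤ n i)
    (F : Set (Odo k n)) (hF : F.Finite) :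
    IsFoundationSet (odoMul n) ((fun x => Set.range (odoMul n x)) '' F) ↔
      ∀ y : Odo k n, ∃ x ∈ F,
        (Set.range (odoMul n x) ∩ Set.range (odoMul n y)).Nonempty := by
  constructor
  · rintro ⟨-, -, hfound⟩ y
    obtain ⟨X, hX, hne⟩ := hfound (Set.range (odoMul n y))
      (odo_range_constructible n y) ⟨odoMul n y (odoOne k n), odoOne k n, rfl⟩
    obtain ⟨x, hx, rfl⟩ := hX
    exact ⟨x, hx, hne⟩
  · intro hex
    refine ⟨hF.image _, ?_, ?_⟩
    · rintro X ⟨x, hx, rfl⟩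
      exact odo_range_constructible n x
    · rintro Y hY ⟨y, hy⟩
      obtain ⟨x, hx, w, hw1, hw2⟩ := hex y
      obtain ⟨b, rfl⟩ := hw2
      refine ⟨Set.range (odoMul n x), ⟨x, hx, rfl⟩, odoMul n y b, hw1, ?_⟩
      rcases hY with rfl | ⟨l, rfl⟩
      · exact absurd hy (Set.notMem_empty y)
      · exact odo_foldr_right_ideal n l y hy b
end

section
/- Let k ≥ 1 and n : Fin k → ℕ with n i ≥ 1 for all i, and suppose the family (log (n i))_{i ∈ Fin k} is linearly independent over ℚ. Then for every nonempty open subset V of the unit circle 𝕋 = {z ∈ ℂ : |z| = 1}, there exists w ∈ V such that the map (Fin k → ℕ) → 𝕋 sending p to w^(∏ i, (n i)^(p i)) is injective; in particular w^{n^p} ≠ w^{n^q} whenever p ≠ q. -/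
open Real

lemma circle_exp_pow (x : ℝ) (m : ℕ) : Circle.exp x ^ m = Circle.exp (m * x) := by
  induction m with
  | zero => simp [Circle.exp_zero]
  | succ m ih => rw [pow_succ, ih, ← Circle.exp_add]; push_cast; ring_nf

lemma prod_pow_injective (k : ℕ) (n : Fin k → ℕ) (hn : ∀ i, 1 ≤ n i)
    (hind : LinearIndependent ℚ (fun i : Fin k => Real.log (n i))) :
    Function.Injective (fun p : Fin k → ℕ => ∏ i, (n i) ^ (p i)) := by
  intro p q hpq
  simp only at hpq
  have hlog : ∑ i, (p i : ℝ) * Real.log (n i) = ∑ i, (q i : ℝ) * Real.log (n i) := by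
    have h1 : Real.log (∏ i, ((n i : ℝ)) ^ (p i)) = Real.log (∏ i, ((n i : ℝ)) ^ (q i)) := by
      congr 1
      exact_mod_cast congrArg (Nat.cast : ℕ → ℝ) hpq
    rw [Real.log_prod, Real.log_prod] at h1
    · simpa [Real.log_pow] using h1
    · intro i _; have := hn i; positivity
    · intro i _; have := hn i; positivity
  have := Fintype.linearIndependent_iff.mp hind (fun i => (p i : ℚ) - (q i : ℚ)) ?_
  · funext i
    have := this i
    have : (p i : ℚ) = q i := by linarith [this]
    exact_mod_cast this
  · have : ∀ (r : Fin k → ℕ), ∑ i, ((r i : ℚ)) • Real.log (n i)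
        = ∑ i, (r i : ℝ) * Real.log (n i) := by
      intro r; congr 1
    simp only [sub_smul, Finset.sum_sub_distrib]
    rw [this p, this q, hlog, sub_self]

lemma exists_nontorsion_in_open :
    ∀ V : Set Circle, IsOpen V → V.Nonempty →
      ∃ w ∈ V, ∀ m : ℕ, 0 < m → w ^ m ≠ 1 := by
  intro V hV ⟨v, hv⟩
  set f : ℝ → ℝ := fun s => s * (2 * π) with hf
  have hU : IsOpen (f ⁻¹' (Circle.exp ⁻¹' V)) :=
    ((hV.preimage Circle.exp.continuous).preimage (by continuity))
  have hne : (f ⁻¹' (Circle.exp ⁻¹' V)).Nonempty := by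
    refine ⟨Complex.arg v / (2 * π), ?_⟩
    have hπ : (2 : ℝ) * π ≠ 0 := by positivity
    simp only [Set.mem_preimage, hf, div_mul_cancel₀ _ hπ]
    simpa [Circle.exp_arg] using hv
  obtain ⟨s, hsI, hsU⟩ := dense_irrational.exists_mem_open hU hne
  refine ⟨Circle.exp (s * (2 * π)), hsU, ?_⟩
  intro m hm hcontra
  rw [circle_exp_pow, show (1 : Circle) = Circle.exp 0 from Circle.exp_zero.symm] at hcontra
  obtain ⟨j, hj⟩ := Circle.exp_eq_exp.mp hcontra
  have hπ : (2 : ℝ) * π ≠ 0 := by positivity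
  have hms : (m : ℝ) * s = j := by
    have h2 : (m : ℝ) * s * (2 * π) = (j : ℝ) * (2 * π) := by
      rw [mul_assoc]; linarith [hj]
    exact mul_right_cancel₀ hπ h2
  have : s = ((j : ℚ) / (m : ℚ) : ℚ) := by
    have hm' : (m : ℝ) ≠ 0 := by positivity
    push_cast
    field_simp
    linarith [hms]
  exact hsI ⟨(j : ℚ) / (m : ℚ), this.symm⟩

/-- If `(log (n i))_i` is linearly independent over `ℚ`, then every nonempty open
subset of the circle `𝕋` contains a point `w` such that `p ↦ w^{n^p}` is injective
on `Fin k → ℕ` (in particular `w^{n^p} ≠ w^{n^q}` whenever `p ≠ q`). -/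
theorem exists_aperiodic_point_in_open (k : ℕ) (hk : 1 ≤ k)
    (n : Fin k → ℕ) (hn : ∀ i, 1 ≤ n i)
    (hind : LinearIndependent ℚ (fun i : Fin k => Real.log (n i))) :
    ∀ V : Set Circle, IsOpen V → V.Nonempty →
      ∃ w ∈ V, Function.Injective (fun p : Fin k → ℕ => w ^ (∏ i, (n i) ^ (p i))) := by
  intro V hV hne
  obtain ⟨w, hwV, hw⟩ := exists_nontorsion_in_open V hV hne
  refine ⟨w, hwV, ?_⟩
  intro p q hpq
  simp only at hpq
  apply prod_pow_injective k n hn hind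
  simp only
  set a := ∏ i, (n i) ^ (p i) with ha
  set b := ∏ i, (n i) ^ (q i) with hb
  by_contra hab
  rcases Nat.lt_or_ge a b with h | h
  · have : w ^ a * w ^ (b - a) = w ^ a * 1 := by
      rw [← pow_add, Nat.add_sub_cancel' h.le, hpq, mul_one]
    have := mul_left_cancel this
    exact hw (b - a) (Nat.sub_pos_of_lt h) this
  · have hlt : b < a := lt_of_le_of_ne h (Ne.symm hab)
    have : w ^ b * w ^ (a - b) = w ^ b * 1 := by
      rw [← pow_add, Nat.add_sub_cancel' hlt.le, ← hpq, mul_one]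
    have := mul_left_cancel this
    exact hw (a - b) (Nat.sub_pos_of_lt hlt) this
end
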